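/- Norm bound (Lemma 5.4): Let p : ℝ^d → ℝ be a multivariate polynomial. Then there exists c ∈ ℓ², where ℓ² is the Hilbert space of square-summable real sequences indexed by multi-indices in ℕ^d, such that p(x) = ⟨c, φ(x)⟩_{ℓ²} for every x ∈ ℝ^d with ‖x‖ ≤ 1, and ‖c‖_{ℓ²} ≤ 2^{deg(p)/2}·‖p‖. -/

import Mathlib

open scoped RealInnerProductSpace
open Finset

/-- The norm of a multivariate polynomial: the Euclidean norm of its coefficient vector. -/
noncomputable def polyNorm {d : ℕ} (p : MvPolynomial (Fin d) ℝ) : ℝ :=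
  Real.sqrt (∑ α ∈ p.support, (p.coeff α) ^ 2)

/-- The feature map associated with the rational kernel: the coordinate of `φ(x)` at the
multi-index `α` is `x^α · sqrt(2^{-|α|} · |α|!/(α₁!⋯α_d!))`. -/
noncomputable def phiMap (d : ℕ) (x : EuclideanSpace ℝ (Fin d)) (α : Fin d →₀ ℕ) : ℝ :=
  (∏ i, x i ^ α i) *
    Real.sqrt (((2 : ℝ) ^ (∑ i, α i))⁻¹ * (Nat.multinomial Finset.univ α : ℝ))

/-! With `φ(x)_α = x^α w_α`, take `c_α = p_α / w_α`, so that `⟪c, φ(x)⟫ = ∑ p_α x^α = p(x)`.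
Since multinomial coefficients are at least `1`, `w_α⁻² ≤ 2^|α| ≤ 2^deg p`, whence
`‖c‖² ≤ 2^deg p ‖p‖²`. On the unit ball `φ(x) ∈ ℓ²`: by the multinomial theorem
`φ(x)_α² ≤ 2^-|α| (∑ xᵢ²)^|α| ≤ ∏ᵢ 2^-αᵢ`, which is summable over `ℕ^d`. -/

lemma summable_prod_pow_of_lt_one {r : ℝ} (h0 : 0 ≤ r) (h1 : r < 1) :
    ∀ d : ℕ, Summable fun f : Fin d → ℕ => ∏ i, r ^ f i
  | 0 => Summable.of_finite
  | d + 1 => by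
    have h := (summable_geometric_of_lt_one h0 h1).mul_of_nonneg
      (summable_prod_pow_of_lt_one h0 h1 d) (fun _ => by positivity) (fun _ => by positivity)
    refine (Fin.consEquiv fun _ : Fin (d + 1) => ℕ).summable_iff.mp ?_
    convert h using 2 with f
    simp [Fin.prod_univ_succ, Fin.consEquiv]

lemma Nat.multinomial_mul_prod_pow_le_sum_pow {ι R : Type*} [Fintype ι] [DecidableEq ι]
    [CommSemiring R] [PartialOrder R] [IsOrderedRing R] (f : ι → ℕ) {y : ι → R}
    (hy : ∀ i, 0 ≤ y i) :
    Nat.multinomial univ f * ∏ i, y i ^ f i ≤ (∑ i, y i) ^ ∑ i, f i := by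
  rw [sum_pow_eq_sum_piAntidiag]
  exact single_le_sum (f := fun k => (Nat.multinomial univ k : R) * ∏ i, y i ^ k i)
    (fun k _ => mul_nonneg (Nat.cast_nonneg _) (prod_nonneg fun i _ => pow_nonneg (hy i) _))
    (by simp)

section FeatureMap

variable {d : ℕ}

noncomputable def phiWeight (α : Fin d →₀ ℕ) : ℝ :=
  Real.sqrt (((2 : ℝ) ^ (∑ i, α i))⁻¹ * (Nat.multinomial univ α : ℝ))

lemma phiMap_apply (x : EuclideanSpace ℝ (Fin d)) (α : Fin d →₀ ℕ) :
    phiMap d x α = (∏ i, x i ^ α i) * phiWeight α :=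
  rfl

lemma sq_phiWeight (α : Fin d →₀ ℕ) :
    phiWeight α ^ 2 = ((2 : ℝ) ^ (∑ i, α i))⁻¹ * (Nat.multinomial univ α : ℝ) :=
  Real.sq_sqrt (by positivity)

lemma phiWeight_pos (α : Fin d →₀ ℕ) : 0 < phiWeight α :=
  Real.sqrt_pos.2 (mul_pos (by positivity) (by exact_mod_cast Nat.multinomial_pos _ _))

lemma inv_sq_phiWeight_le (α : Fin d →₀ ℕ) : (phiWeight α ^ 2)⁻¹ ≤ 2 ^ ∑ i, α i := by
  have h : (1 : ℝ) ≤ Nat.multinomial univ α := by exact_mod_cast Nat.multinomial_pos _ _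
  rw [sq_phiWeight, mul_inv, inv_inv]
  exact mul_le_of_le_one_right (by positivity) (inv_le_one_of_one_le₀ h)

lemma sq_phiMap_le {x : EuclideanSpace ℝ (Fin d)} (hx : ‖x‖ ≤ 1) (α : Fin d →₀ ℕ) :
    phiMap d x α ^ 2 ≤ ∏ i, (2 : ℝ)⁻¹ ^ α i := by
  have hsum : ∑ i, x i ^ 2 ≤ 1 := by
    rw [← EuclideanSpace.real_norm_sq_eq]
    exact pow_le_one₀ (norm_nonneg x) hx
  have hterm : (Nat.multinomial univ α : ℝ) * ∏ i, (x i ^ 2) ^ α i ≤ 1 :=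
    (Nat.multinomial_mul_prod_pow_le_sum_pow α fun i => sq_nonneg (x i)).trans
      (pow_le_one₀ (sum_nonneg fun i _ => sq_nonneg _) hsum)
  have hprod : (∏ i, x i ^ α i) ^ 2 = ∏ i, (x i ^ 2) ^ α i := by
    rw [← prod_pow]
    exact prod_congr rfl fun i _ => pow_right_comm _ _ _
  calc phiMap d x α ^ 2
      = ((2 : ℝ) ^ (∑ i, α i))⁻¹ * ((Nat.multinomial univ α : ℝ) * ∏ i, (x i ^ 2) ^ α i) := by
        rw [phiMap_apply, mul_pow, sq_phiWeight, hprod]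
        ring
    _ ≤ ((2 : ℝ) ^ (∑ i, α i))⁻¹ := mul_le_of_le_one_right (by positivity) hterm
    _ = ∏ i, (2 : ℝ)⁻¹ ^ α i := by rw [prod_pow_eq_pow_sum, inv_pow]

lemma memℓp_phiMap {x : EuclideanSpace ℝ (Fin d)} (hx : ‖x‖ ≤ 1) : Memℓp (phiMap d x) 2 := by
  have hgeom : Summable fun α : Fin d →₀ ℕ => ∏ i, (2 : ℝ)⁻¹ ^ α i :=
    (summable_prod_pow_of_lt_one (by norm_num) (by norm_num) d).comp_injective
      Finsupp.equivFunOnFinite.injective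
  refine memℓp_gen (hgeom.of_nonneg_of_le (fun α => by positivity) fun α => ?_)
  simpa [Real.rpow_two, sq_abs] using sq_phiMap_le hx α

noncomputable def coeffVec (p : MvPolynomial (Fin d) ℝ) : lp (fun _ : Fin d →₀ ℕ => ℝ) 2 :=
  ∑ α ∈ p.support, lp.single 2 α (p.coeff α / phiWeight α)

lemma inner_coeffVec (p : MvPolynomial (Fin d) ℝ) (x : EuclideanSpace ℝ (Fin d))
    (hmem : Memℓp (phiMap d x) 2) :
    ⟪coeffVec p, (⟨phiMap d x, hmem⟩ : lp (fun _ : Fin d →₀ ℕ => ℝ) 2)⟫ =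
      MvPolynomial.eval (fun i => x i) p := by
  rw [coeffVec, sum_inner, MvPolynomial.eval_eq']
  refine sum_congr rfl fun α _ => ?_
  rw [lp.inner_single_left, RCLike.inner_apply, conj_trivial]
  change phiMap d x α * _ = _
  rw [phiMap_apply]
  field_simp [(phiWeight_pos α).ne']

lemma norm_coeffVec_le (p : MvPolynomial (Fin d) ℝ) :
    ‖coeffVec p‖ ≤ 2 ^ ((p.totalDegree : ℝ) / 2) * polyNorm p := by
  have hsq : ‖coeffVec p‖ ^ 2 = ∑ α ∈ p.support, (p.coeff α / phiWeight α) ^ 2 := by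
    have h := lp.norm_sum_single (p := 2) (by norm_num)
      (fun α => p.coeff α / phiWeight α) p.support
    simpa only [coeffVec, ENNReal.toReal_ofNat, Real.rpow_two, Real.norm_eq_abs, sq_abs] using h
  have hdeg : ∀ α ∈ p.support, ∑ i, α i ≤ p.totalDegree := fun α hα => by
    simpa [Finsupp.sum_fintype] using MvPolynomial.le_totalDegree hα
  refine le_of_pow_le_pow_left₀ two_ne_zero (by unfold polyNorm; positivity) ?_
  calc ‖coeffVec p‖ ^ 2
      = ∑ α ∈ p.support, (phiWeight α ^ 2)⁻¹ * p.coeff α ^ 2 := by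
        rw [hsq]
        exact sum_congr rfl fun α _ => by rw [div_pow, div_eq_inv_mul]
    _ ≤ ∑ α ∈ p.support, 2 ^ p.totalDegree * p.coeff α ^ 2 :=
        sum_le_sum fun α hα => mul_le_mul_of_nonneg_right
          ((inv_sq_phiWeight_le α).trans (pow_le_pow_right₀ one_le_two (hdeg α hα)))
          (sq_nonneg _)
    _ = (2 ^ ((p.totalDegree : ℝ) / 2) * polyNorm p) ^ 2 := by
        rw [mul_pow, ← mul_sum, polyNorm, Real.sq_sqrt (sum_nonneg fun _ _ => sq_nonneg _),
          ← Real.rpow_mul_natCast zero_le_two, Nat.cast_ofNat, div_mul_cancel₀ _ two_ne_zero,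
          Real.rpow_natCast]

end FeatureMap

/-- Norm bound: every multivariate polynomial `p` on `ℝ^d` can be represented on the unit
ball as an inner product `p(x) = ⟪c, φ(x)⟫` with some `c ∈ ℓ²` (indexed by multi-indices)
of norm at most `2^{deg(p)/2}·‖p‖`. -/
theorem norm_bound (d : ℕ) (p : MvPolynomial (Fin d) ℝ) :
    ∃ c : lp (fun _ : Fin d →₀ ℕ => ℝ) 2,
      ‖c‖ ≤ 2 ^ ((p.totalDegree : ℝ) / 2) * polyNorm p ∧
      ∀ x : EuclideanSpace ℝ (Fin d), ‖x‖ ≤ 1 →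
        ∃ hmem : Memℓp (phiMap d x) 2,
          MvPolynomial.eval (fun i => x i) p =
            ⟪c, (⟨phiMap d x, hmem⟩ : lp (fun _ : Fin d →₀ ℕ => ℝ) 2)⟫ :=
  ⟨coeffVec p, norm_coeffVec_le p, fun x hx =>
    ⟨memℓp_phiMap hx, (inner_coeffVec p x (memℓp_phiMap hx)).symm⟩⟩
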